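/- arXiv:math/0607007 — 2 statements merged into one kernel-verified Lean document; each statement's English description precedes it below -/
import Mathlib

section
/- Let ν ≥ -1/2 be a real number. Then there exists a constant C > 0 such that for every z ∈ ℂ one has |Ĩ_ν(z)| ≤ C·e^{|Re z|}. -/
open MeasureTheory Set

set_option maxHeartbeats 1000000

private lemma gamma_half (k : ℕ) :
    Real.Gamma ((k : ℝ) + 1/2) =
      (Nat.factorial (2*k) : ℝ) * Real.sqrt Real.pi / (4^k * Nat.factorial k) := by
  induction k with
  | zero => simpa using Real.Gamma_one_half_eq
  | succ n ih =>
    have h1 : ((n+1 : ℕ) : ℝ) + 1/2 = ((n:ℝ) + 1/2) + 1 := by push_cast; ring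
    rw [h1, Real.Gamma_add_one (by positivity), ih]
    have h2 : 2*(n+1) = (2*n+1) + 1 := by ring
    rw [h2, Nat.factorial_succ, Nat.factorial_succ, Nat.factorial_succ]
    have h4 : (Nat.factorial n : ℝ) ≠ 0 := by positivity
    have h5 : (Nat.factorial (2*n) : ℝ) ≠ 0 := by positivity
    have h6 : ((4:ℝ))^n ≠ 0 := by positivity
    push_cast
    field_simp
    ring

private lemma norm_cosh_le (w : ℂ) : ‖Complex.cosh w‖ ≤ Real.exp |w.re| := by
  rw [show Complex.cosh w = (Complex.exp w + Complex.exp (-w)) / 2 from rfl]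
  have h1 : ‖Complex.exp w‖ = Real.exp w.re := Complex.norm_exp w
  have h2 : ‖Complex.exp (-w)‖ = Real.exp (-w.re) := by
    rw [Complex.norm_exp]; simp
  calc ‖(Complex.exp w + Complex.exp (-w)) / 2‖
      ≤ (‖Complex.exp w‖ + ‖Complex.exp (-w)‖) / 2 := by
        rw [norm_div]
        gcongr
        · exact norm_add_le _ _
        · simp
    _ ≤ (Real.exp |w.re| + Real.exp |w.re|) / 2 := by
        rw [h1, h2]; gcongr <;> [exact le_abs_self _; exact neg_le_abs _]
    _ = Real.exp |w.re| := by ring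

private lemma pow_half (z : ℂ) (k : ℕ) : (z/2)^(2*k) * 4^k = z^(2*k) := by
  rw [pow_mul, pow_mul, ← mul_pow]
  norm_num
  ring_nf

/-- The normalized modified Bessel function
`Ĩ_ν(z) = Σ_{k=0}^∞ (z/2)^{2k}/(k!·Γ(ν+k+1))`. -/
noncomputable def ItildeC (ν : ℝ) (z : ℂ) : ℂ :=
  ∑' k : ℕ, (z / 2) ^ (2 * k) / ((Nat.factorial k : ℂ) * Complex.Gamma ((ν : ℂ) + k + 1))

/-- For `ν ≥ -1/2`, there is a constant `C > 0` such that
`|Ĩ_ν(z)| ≤ C·e^{|Re z|}` for all `z ∈ ℂ`. -/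
theorem itilde_bound (ν : ℝ) (hν : -1/2 ≤ ν) :
    ∃ C : ℝ, 0 < C ∧ ∀ z : ℂ, ‖ItildeC ν z‖ ≤ C * Real.exp |z.re| := by
  rcases eq_or_lt_of_le hν with heq | hlt
  · -- the boundary case `ν = -1/2`
    refine ⟨1, one_pos, fun z => ?_⟩
    have hI : ItildeC ν z = Complex.cosh z / (Real.sqrt Real.pi : ℂ) := by
      unfold ItildeC
      rw [Complex.cosh_eq_tsum, ← tsum_div_const]
      congr 1
      ext k
      have hg : ((ν:ℝ):ℂ) + k + 1 = (((k : ℝ) + 1/2 : ℝ) : ℂ) := by rw [← heq]; push_cast; ring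
      rw [hg, Complex.Gamma_ofReal, gamma_half k]
      have h4 : ((4:ℂ))^k ≠ 0 := pow_ne_zero _ (by norm_num)
      have hfac : (Nat.factorial k : ℂ) ≠ 0 := by exact_mod_cast Nat.cast_ne_zero.2 (Nat.factorial_ne_zero k)
      have hfac2 : (Nat.factorial (2*k) : ℂ) ≠ 0 := by exact_mod_cast Nat.cast_ne_zero.2 (Nat.factorial_ne_zero (2*k))
      have hpi : ((Real.sqrt Real.pi : ℝ) : ℂ) ≠ 0 := by
        simp [Real.sqrt_ne_zero', Real.pi_pos]
      have hp : (z/2)^(2*k) = z^(2*k)/4^k := (eq_div_iff h4).2 (pow_half z k)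
      push_cast
      rw [hp]
      field_simp
    have hpi1 : (1:ℝ) ≤ Real.sqrt Real.pi := by
      rw [show (1:ℝ) = Real.sqrt 1 by simp]
      exact Real.sqrt_le_sqrt (by linarith [Real.pi_gt_three])
    rw [hI, norm_div, Complex.norm_real, Real.norm_eq_abs,
      abs_of_pos (by positivity : (0:ℝ) < Real.sqrt Real.pi), one_mul]
    have h := norm_cosh_le z
    rw [div_le_iff₀ (by positivity)]
    nlinarith [Real.exp_pos |z.re|, norm_nonneg (Complex.cosh z)]
  · -- the main case `ν > -1/2`
    set v : ℂ := (ν : ℂ) + 1/2 with hv_def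
    have hvre : 0 < v.re := by simp [hv_def]; linarith
    set u : ℕ → ℂ := fun k => (k : ℂ) + 1/2 with hu_def
    have hure : ∀ k, 0 < (u k).re := by
      intro k; simp [hu_def]; positivity
    set W : ℕ → ℝ → ℂ := fun k s => (s:ℂ) ^ (u k - 1) * (1 - (s:ℂ)) ^ (v - 1) with hW_def
    -- integrability
    have hWint : ∀ k, IntegrableOn (W k) (Ioc (0:ℝ) 1) volume := by
      intro k
      exact (intervalIntegrable_iff_integrableOn_Ioc_of_le zero_le_one).1
        (Complex.betaIntegral_convergent (hure k) hvre)
    -- norm of W on Ioc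
    have hWnorm : ∀ k, ∀ s ∈ Ioc (0:ℝ) 1, ‖W k s‖ ≤ ‖W 0 s‖ := by
      intro k s hs
      simp only [hW_def, norm_mul]
      gcongr
      rw [
        Complex.norm_cpow_eq_rpow_re_of_pos hs.1, Complex.norm_cpow_eq_rpow_re_of_pos hs.1]
      apply Real.rpow_le_rpow_of_exponent_ge hs.1 hs.2
      simp [hu_def]
    set B0 : ℝ := ∫ s in Ioc (0:ℝ) 1, ‖W 0 s‖ with hB0
    have hB0nn : 0 ≤ B0 := integral_nonneg fun s => norm_nonneg _
    -- constant
    have hgpos : 0 < Real.Gamma (ν + 1/2) := Real.Gamma_pos_of_pos (by linarith)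
    have hspi : 0 < Real.sqrt Real.pi := Real.sqrt_pos.2 Real.pi_pos
    set c : ℂ := ((Real.sqrt Real.pi * Real.Gamma (ν + 1/2) : ℝ) : ℂ)⁻¹ with hc_def
    have hcnorm : ‖c‖ = (Real.sqrt Real.pi * Real.Gamma (ν + 1/2))⁻¹ := by
      rw [hc_def, norm_inv, Complex.norm_real, Real.norm_eq_abs, abs_of_pos (by positivity)]
    have hinvpos : (0:ℝ) < (Real.sqrt Real.pi * Real.Gamma (ν + 1/2))⁻¹ :=
      inv_pos.2 (mul_pos hspi hgpos)
    have hCpos : 0 < (Real.sqrt Real.pi * Real.Gamma (ν + 1/2))⁻¹ * B0 + 1 :=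
      add_pos_of_nonneg_of_pos (mul_nonneg hinvpos.le hB0nn) one_pos
    refine ⟨(Real.sqrt Real.pi * Real.Gamma (ν + 1/2))⁻¹ * B0 + 1, hCpos, fun z => ?_⟩
    -- series terms
    set F : ℕ → ℝ → ℂ := fun k s => z^(2*k) / (Nat.factorial (2*k) : ℂ) * W k s with hF_def
    have hFint : ∀ k, Integrable (F k) (volume.restrict (Ioc (0:ℝ) 1)) := by
      intro k
      exact (hWint k).const_mul _
    -- summability of integrals of norms
    have hFnormint : ∀ k, (∫ s in Ioc (0:ℝ) 1, ‖F k s‖)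
        ≤ ‖z‖^(2*k) / (Nat.factorial (2*k) : ℝ) * B0 := by
      intro k
      have : ∀ s, ‖F k s‖ = ‖z‖^(2*k) / (Nat.factorial (2*k) : ℝ) * ‖W k s‖ := by
        intro s
        simp [hF_def, norm_mul, norm_div, norm_pow]
      simp_rw [this]
      rw [integral_const_mul]
      exact mul_le_mul_of_nonneg_left
        (setIntegral_mono_on ((hWint k).norm) ((hWint 0).norm) measurableSet_Ioc (hWnorm k))
        (by positivity)
    have hsum : Summable fun k => ∫ s in Ioc (0:ℝ) 1, ‖F k s‖ := by
      apply Summable.of_nonneg_of_le (fun k => integral_nonneg fun s => norm_nonneg _) hFnormint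
      have h1 : Summable fun k => ‖z‖^(2*k) / (Nat.factorial (2*k) : ℝ) :=
        (Real.summable_pow_div_factorial ‖z‖).comp_injective
          (fun a b h => by omega)
      exact h1.mul_right _
    -- interchange
    have hHS := MeasureTheory.hasSum_integral_of_summable_integral_norm hFint hsum
    -- pointwise sum
    have hpt : ∀ s ∈ Ioc (0:ℝ) 1, (∑' k, F k s)
        = Complex.cosh (z * (Real.sqrt s : ℝ)) * W 0 s := by
      intro s hs
      have hs0 : (s:ℂ) ≠ 0 := Complex.ofReal_ne_zero.2 (ne_of_gt hs.1)
      have hterm : ∀ k, F k s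
          = (z * (Real.sqrt s : ℝ))^(2*k) / (Nat.factorial (2*k) : ℂ) * W 0 s := by
        intro k
        have h1 : (s:ℂ) ^ (u k - 1) = (s:ℂ)^(k:ℕ) * (s:ℂ) ^ (u 0 - 1) := by
          rw [← Complex.cpow_natCast, ← Complex.cpow_add _ _ hs0]
          congr 1
          simp [hu_def]
          ring
        have h2 : ((Real.sqrt s : ℝ):ℂ)^(2*k) = (s:ℂ)^(k:ℕ) := by
          rw [← Complex.ofReal_pow, ← Complex.ofReal_pow]
          congr 1
          rw [pow_mul, Real.sq_sqrt hs.1.le]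
        simp only [hF_def, hW_def, h1]
        rw [mul_pow, h2]
        ring
      rw [tsum_congr hterm, tsum_mul_right, ← Complex.cosh_eq_tsum]
    have hIeq : ∫ s in Ioc (0:ℝ) 1, (∑' k, F k s)
        = ∫ s in Ioc (0:ℝ) 1, Complex.cosh (z * (Real.sqrt s : ℝ)) * W 0 s :=
      setIntegral_congr_fun measurableSet_Ioc hpt
    -- coefficient identity
    have hcoef : ∀ k, (z / 2) ^ (2 * k) / ((Nat.factorial k : ℂ) * Complex.Gamma ((ν : ℂ) + k + 1))
        = c * ∫ s in Ioc (0:ℝ) 1, F k s := by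
      intro k
      have hbeta0 : Complex.betaIntegral (u k) v = ∫ s in Ioc (0:ℝ) 1, W k s := by
        rw [Complex.betaIntegral, intervalIntegral.integral_of_le zero_le_one]
      have hint : ∫ s in Ioc (0:ℝ) 1, F k s
          = z^(2*k) / (Nat.factorial (2*k) : ℂ) * Complex.betaIntegral (u k) v := by
        rw [hF_def, hbeta0]
        simp only []
        rw [integral_const_mul]
      have hGsum_ne : Complex.Gamma (u k + v) ≠ 0 :=
        Complex.Gamma_ne_zero_of_re_pos (by
          simp only [hu_def, hv_def, Complex.add_re, Complex.natCast_re, Complex.ofReal_re,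
            Complex.one_re, Complex.div_re]
          have : (0:ℝ) ≤ (k:ℝ) := Nat.cast_nonneg k
          norm_num
          linarith)
      have hGv_ne : Complex.Gamma v ≠ 0 := Complex.Gamma_ne_zero_of_re_pos hvre
      have hbeta : Complex.betaIntegral (u k) v
          = Complex.Gamma (u k) * Complex.Gamma v / Complex.Gamma (u k + v) := by
        rw [eq_div_iff hGsum_ne, mul_comm (Complex.betaIntegral (u k) v),
          ← Complex.Gamma_mul_Gamma_eq_betaIntegral (hure k) hvre]
      have hGuv : Complex.Gamma (u k + v) = Complex.Gamma ((ν : ℂ) + k + 1) := by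
        congr 1
        simp [hu_def, hv_def]
        ring
      have hGu : Complex.Gamma (u k)
          = ((Nat.factorial (2*k) : ℝ) * Real.sqrt Real.pi / (4^k * Nat.factorial k) : ℝ) := by
        have : u k = (((k:ℝ) + 1/2 : ℝ) : ℂ) := by push_cast [hu_def]; ring
        rw [this, Complex.Gamma_ofReal, gamma_half]
      have hGv : Complex.Gamma v = ((Real.Gamma (ν + 1/2) : ℝ) : ℂ) := by
        have : v = (((ν + 1/2 : ℝ)) : ℂ) := by push_cast [hv_def]; ring
        rw [this, Complex.Gamma_ofReal]
      rw [hint, hbeta, hGuv, hGu, hGv, hc_def]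
      have h4 : ((4:ℂ))^k ≠ 0 := pow_ne_zero _ (by norm_num)
      have hfac : (Nat.factorial k : ℂ) ≠ 0 := Nat.cast_ne_zero.2 (Nat.factorial_ne_zero k)
      have hfac2 : (Nat.factorial (2*k) : ℂ) ≠ 0 := Nat.cast_ne_zero.2 (Nat.factorial_ne_zero (2*k))
      have hpi : ((Real.sqrt Real.pi : ℝ) : ℂ) ≠ 0 := Complex.ofReal_ne_zero.2 (ne_of_gt hspi)
      have hgc : ((Real.Gamma (ν + 1/2) : ℝ) : ℂ) ≠ 0 := Complex.ofReal_ne_zero.2 (ne_of_gt hgpos)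
      have hG_ne : Complex.Gamma ((ν : ℂ) + k + 1) ≠ 0 := by
        rw [← hGuv]; exact hGsum_ne
      have hp : (z/2)^(2*k) = z^(2*k)/4^k := (eq_div_iff h4).2 (pow_half z k)
      rw [hp]
      push_cast
      generalize Complex.Gamma ((ν:ℂ) + (k:ℂ) + 1) = G at hG_ne ⊢
      generalize ((Real.Gamma (ν + 1/2) : ℝ) : ℂ) = Y at hgc ⊢
      generalize ((Real.sqrt Real.pi : ℝ) : ℂ) = P at hpi ⊢
      generalize ((Nat.factorial k : ℕ) : ℂ) = A at hfac ⊢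
      generalize ((Nat.factorial (2*k) : ℕ) : ℂ) = B at hfac2 ⊢
      generalize (4:ℂ)^k = Q at h4 ⊢
      field_simp
    -- assemble
    have hItilde : ItildeC ν z = c * ∫ s in Ioc (0:ℝ) 1, Complex.cosh (z * (Real.sqrt s : ℝ)) * W 0 s := by
      rw [← hIeq]
      unfold ItildeC
      rw [tsum_congr hcoef, tsum_mul_left, hHS.tsum_eq]
    rw [hItilde, norm_mul, hcnorm]
    -- bound the integral
    have hbd : ‖∫ s in Ioc (0:ℝ) 1, Complex.cosh (z * (Real.sqrt s : ℝ)) * W 0 s‖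
        ≤ Real.exp |z.re| * B0 := by
      refine (norm_integral_le_integral_norm _).trans ?_
      rw [hB0, ← integral_const_mul]
      apply integral_mono_of_nonneg (Filter.Eventually.of_forall fun s => norm_nonneg _)
        (((hWint 0).norm).const_mul _)
      rw [Filter.EventuallyLE, ae_restrict_iff' measurableSet_Ioc]
      apply Filter.Eventually.of_forall
      intro s hs
      rw [norm_mul]
      gcongr
      refine (norm_cosh_le _).trans ?_
      apply Real.exp_le_exp.2
      have hre : (z * (Real.sqrt s : ℝ)).re = z.re * Real.sqrt s := by
        simp [Complex.mul_re]
      rw [hre, abs_mul, abs_of_nonneg (Real.sqrt_nonneg s)]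
      nlinarith [abs_nonneg z.re, Real.sqrt_le_one.2 hs.2, Real.sqrt_nonneg s]
    calc (Real.sqrt Real.pi * Real.Gamma (ν + 1/2))⁻¹ *
          ‖∫ s in Ioc (0:ℝ) 1, Complex.cosh (z * (Real.sqrt s : ℝ)) * W 0 s‖
        ≤ (Real.sqrt Real.pi * Real.Gamma (ν + 1/2))⁻¹ * (Real.exp |z.re| * B0) := by
          gcongr
      _ ≤ ((Real.sqrt Real.pi * Real.Gamma (ν + 1/2))⁻¹ * B0 + 1) * Real.exp |z.re| := by
          nlinarith [Real.exp_pos |z.re|, Real.add_one_le_exp |z.re|, abs_nonneg z.re,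
            mul_nonneg (inv_nonneg.2 (le_of_lt (by positivity : (0:ℝ) < Real.sqrt Real.pi * Real.Gamma (ν + 1/2)))) hB0nn]
end

section
/- Let m ≥ 2 and 0 ≤ l ≤ a be integers, let p : ℝ^m → ℝ be a harmonic polynomial homogeneous of degree l, and set u(x) := L_{a-l}^{m-2+2l}(4|x|)·e^{-2|x|}·p(x). Then for every x ∈ ℝ^m ∖ {0}, |x|·((Δu)(x)/4 − u(x)) = −(a + (m-1)/2)·u(x); that is, u is an eigenfunction of the operator D = |x|(Δ/4 − 1) with eigenvalue −(a + (m-1)/2). -/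
open MeasureTheory

/-- The Laguerre polynomial
`L_n^α(x) = Σ_{k=0}^n (-1)^k (Γ(n+α+1)/(Γ(k+α+1)(n-k)! k!)) x^k`. -/
noncomputable def laguerre (n : ℕ) (α : ℝ) (x : ℝ) : ℝ :=
  ∑ k ∈ Finset.range (n + 1),
    (-1 : ℝ) ^ k *
      (Real.Gamma (n + α + 1) /
        (Real.Gamma (k + α + 1) * (Nat.factorial (n - k)) * (Nat.factorial k))) * x ^ k

noncomputable def lagc (n : ℕ) (α : ℝ) (k : ℕ) : ℝ :=
  (-1 : ℝ) ^ k *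
      (Real.Gamma (n + α + 1) /
        (Real.Gamma (k + α + 1) * (Nat.factorial (n - k)) * (Nat.factorial k)))

lemma laguerre_eq (n : ℕ) (α : ℝ) (x : ℝ) :
    laguerre n α x = ∑ k ∈ Finset.range (n + 1), lagc n α k * x ^ k := rfl

noncomputable def lagd (n : ℕ) (α : ℝ) (x : ℝ) : ℝ :=
  ∑ k ∈ Finset.range (n + 1), lagc n α k * ((k : ℝ) * x ^ (k - 1))

noncomputable def lagdd (n : ℕ) (α : ℝ) (x : ℝ) : ℝ :=
  ∑ k ∈ Finset.range (n + 1), lagc n α k * ((k : ℝ) * (((k:ℝ) - 1) * x ^ (k - 2)))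

lemma hasDerivAt_laguerre (n : ℕ) (α : ℝ) (x : ℝ) :
    HasDerivAt (laguerre n α) (lagd n α x) x := by
  have : HasDerivAt (fun y => ∑ k ∈ Finset.range (n + 1), lagc n α k * y ^ k)
      (∑ k ∈ Finset.range (n + 1), lagc n α k * ((k : ℝ) * x ^ (k - 1))) x := by
    apply HasDerivAt.fun_sum
    intro k _
    exact (hasDerivAt_pow k x).const_mul (lagc n α k)
  exact this

lemma hasDerivAt_lagd (n : ℕ) (α : ℝ) (x : ℝ) :
    HasDerivAt (lagd n α) (lagdd n α x) x := by
  have : HasDerivAt (fun y => ∑ k ∈ Finset.range (n + 1), lagc n α k * ((k:ℝ) * y ^ (k-1)))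
      (∑ k ∈ Finset.range (n + 1), lagc n α k * ((k : ℝ) * (((k-1 : ℕ) : ℝ) * x ^ (k - 1 - 1)))) x := by
    apply HasDerivAt.fun_sum
    intro k _
    exact ((hasDerivAt_pow (k-1) x).const_mul (k:ℝ)).const_mul (lagc n α k)
  refine this.congr_deriv ?_
  unfold lagdd
  apply Finset.sum_congr rfl
  intro k _
  rcases k with _ | k
  · simp
  · push_cast [Nat.succ_sub_one]
    ring
lemma lagc_rec (n : ℕ) (α : ℝ) (hα : 0 ≤ α) (k : ℕ) (hk : k < n) :
    lagc n α (k+1) * (((k:ℝ)+1) * ((k:ℝ)+1+α)) = -(((n:ℝ) - k) * lagc n α k) := by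
  have hΓpos : 0 < Real.Gamma ((k:ℝ) + α + 1) :=
    Real.Gamma_pos_of_pos (by positivity)
  have hcast : ((k+1 : ℕ) : ℝ) + α + 1 = ((k:ℝ) + α + 1) + 1 := by push_cast; ring
  have hΓ : Real.Gamma (((k+1 : ℕ) : ℝ) + α + 1) = ((k:ℝ) + α + 1) * Real.Gamma ((k:ℝ) + α + 1) := by
    rw [hcast, Real.Gamma_add_one (ne_of_gt (by positivity))]
  have hnk : n - k = (n - (k+1)) + 1 := by omega
  have hfact : ((Nat.factorial (n - k) : ℕ) : ℝ)
      = ((n:ℝ) - k) * (Nat.factorial (n - (k+1)) : ℝ) := by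
    rw [hnk, Nat.factorial_succ]
    push_cast [Nat.cast_sub (by omega : k + 1 ≤ n)]
    ring
  have hfact2 : ((Nat.factorial (k+1) : ℕ) : ℝ) = ((k:ℝ)+1) * (Nat.factorial k : ℝ) := by
    rw [Nat.factorial_succ]; push_cast; ring
  have h1 : (Nat.factorial (n - (k+1)) : ℝ) ≠ 0 := by positivity
  have h2 : (Nat.factorial k : ℝ) ≠ 0 := by positivity
  have h3 : Real.Gamma ((k:ℝ) + α + 1) ≠ 0 := ne_of_gt hΓpos
  have h4 : (n:ℝ) - k ≠ 0 := by
    have : (k:ℝ) < n := by exact_mod_cast hk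
    linarith
  have h5 : (k:ℝ) + α + 1 ≠ 0 := by positivity
  have h6 : (k:ℝ) + 1 ≠ 0 := by positivity
  unfold lagc
  rw [hΓ, hfact, hfact2, pow_succ]
  field_simp
  ring

lemma laguerre_ode (n : ℕ) (α : ℝ) (hα : 0 ≤ α) (x : ℝ) :
    x * lagdd n α x + (α + 1 - x) * lagd n α x + (n : ℝ) * laguerre n α x = 0 := by
  have expand : x * lagdd n α x + (α + 1 - x) * lagd n α x + (n : ℝ) * laguerre n α x
      = (∑ k ∈ Finset.range (n + 1), lagc n α k * ((k:ℝ) * ((k:ℝ) + α)) * x ^ (k - 1))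
        + (∑ k ∈ Finset.range (n + 1), lagc n α k * ((n:ℝ) - (k:ℝ)) * x ^ k) := by
    unfold lagdd lagd
    rw [laguerre_eq]
    rw [Finset.mul_sum, Finset.mul_sum, Finset.mul_sum, ← Finset.sum_add_distrib,
      ← Finset.sum_add_distrib, ← Finset.sum_add_distrib]
    apply Finset.sum_congr rfl
    intro k _
    rcases k with _ | k
    · simp [mul_comm]
    · rcases k with _ | k
      · show x * (lagc n α 1 * (((1:ℕ):ℝ) * ((((1:ℕ):ℝ) - 1) * x ^ (0:ℕ))))
              + (α + 1 - x) * (lagc n α 1 * (((1:ℕ):ℝ) * x ^ (0:ℕ)))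
              + (n:ℝ) * (lagc n α 1 * x ^ (1:ℕ))
            = lagc n α 1 * (((1:ℕ):ℝ) * (((1:ℕ):ℝ) + α)) * x ^ (0:ℕ)
              + lagc n α 1 * ((n:ℝ) - ((1:ℕ):ℝ)) * x ^ (1:ℕ)
        push_cast
        ring
      · show x * (lagc n α (k+2) * (((k+2:ℕ):ℝ) * ((((k+2:ℕ):ℝ) - 1) * x ^ k)))
              + (α + 1 - x) * (lagc n α (k+2) * (((k+2:ℕ):ℝ) * x ^ (k+1)))
              + (n:ℝ) * (lagc n α (k+2) * x ^ (k+2))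
            = lagc n α (k+2) * (((k+2:ℕ):ℝ) * (((k+2:ℕ):ℝ) + α)) * x ^ (k+1)
              + lagc n α (k+2) * ((n:ℝ) - ((k+2:ℕ):ℝ)) * x ^ (k+2)
        push_cast
        ring
  rw [expand]
  have hA : (∑ k ∈ Finset.range (n + 1), lagc n α k * ((k:ℝ) * ((k:ℝ) + α)) * x ^ (k - 1))
      = ∑ k ∈ Finset.range n, lagc n α (k+1) * (((k+1:ℕ):ℝ) * (((k+1:ℕ):ℝ) + α)) * x ^ k := by
    rw [Finset.sum_range_succ']
    simp [Nat.add_sub_cancel]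
  have hB : (∑ k ∈ Finset.range (n + 1), lagc n α k * ((n:ℝ) - (k:ℝ)) * x ^ k)
      = ∑ k ∈ Finset.range n, lagc n α k * ((n:ℝ) - (k:ℝ)) * x ^ k := by
    rw [Finset.sum_range_succ]
    simp
  rw [hA, hB, ← Finset.sum_add_distrib]
  apply Finset.sum_eq_zero
  intro k hk
  have hrec := lagc_rec n α hα k (Finset.mem_range.mp hk)
  push_cast
  linear_combination x ^ k * hrec

open MvPolynomial

lemma hasDerivAt_eval_line {m : ℕ} (P : MvPolynomial (Fin m) ℝ) (c e : Fin m → ℝ) (s : ℝ) :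
    HasDerivAt (fun t : ℝ => MvPolynomial.eval (fun i => c i + t * e i) P)
      (∑ i, e i * MvPolynomial.eval (fun i => c i + s * e i) (MvPolynomial.pderiv i P)) s := by
  induction P using MvPolynomial.induction_on with
  | C r => simp only [eval_C, pderiv_C, map_zero, mul_zero, Finset.sum_const_zero]
           exact hasDerivAt_const s r
  | add p q hp hq =>
      simpa only [map_add, mul_add, Finset.sum_add_distrib] using hp.fun_add hq
  | mul_X p i hp =>
      have h2 : HasDerivAt (fun t : ℝ => c i + t * e i) (e i) s :=
        (hasDerivAt_mul_const (e i)).const_add (c i)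
      have key := hp.fun_mul h2
      simp only [map_mul, eval_X] at key ⊢
      refine key.congr_deriv ?_
      symm
      have hsp : ∀ j : Fin m, pderiv j (p * X i) = pderiv j p * X i + p * (if j = i then 1 else 0) := by
        intro j
        rw [pderiv_mul]
        congr 1
        rw [pderiv_X]
        rcases eq_or_ne j i with h | h
        · subst h; simp
        · simp [Pi.single_eq_of_ne' h.symm, h]
      simp only [hsp, map_add, map_mul, eval_X,
        apply_ite (MvPolynomial.eval fun i => c i + s * e i), map_one, map_zero, mul_ite,
        mul_one, mul_zero, mul_add, Finset.sum_add_distrib, Finset.sum_ite_eq',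
        Finset.mem_univ, if_true, ← mul_assoc]
      rw [← Finset.sum_mul, ← Finset.sum_mul, ← Finset.sum_mul]
      ring

lemma hasDerivAt_eval_line_single {m : ℕ} (P : MvPolynomial (Fin m) ℝ) (c : Fin m → ℝ)
    (j : Fin m) (s : ℝ) :
    HasDerivAt (fun t : ℝ => MvPolynomial.eval (fun i => c i + t * (if i = j then (1:ℝ) else 0)) P)
      (MvPolynomial.eval (fun i => c i + s * (if i = j then (1:ℝ) else 0))
        (MvPolynomial.pderiv j P)) s := by
  have := hasDerivAt_eval_line P c (fun i => if i = j then (1:ℝ) else 0) s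
  simpa [ite_mul, Finset.sum_ite_eq', Finset.mem_univ] using this

lemma euler_identity {m l : ℕ} (P : MvPolynomial (Fin m) ℝ)
    (hhom : ∀ lam : ℝ, 0 < lam → ∀ x : EuclideanSpace ℝ (Fin m),
      MvPolynomial.eval (fun i => lam * x i) P =
        lam ^ l * MvPolynomial.eval (fun i => x i) P)
    (x : EuclideanSpace ℝ (Fin m)) :
    ∑ i, x i * MvPolynomial.eval (fun i => x i) (MvPolynomial.pderiv i P)
      = (l : ℝ) * MvPolynomial.eval (fun i => x i) P := by
  have h1 : HasDerivAt (fun t : ℝ => MvPolynomial.eval (fun i => t * x i) P)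
      (∑ i, x i * MvPolynomial.eval (fun i => x i) (MvPolynomial.pderiv i P)) 1 := by
    have := hasDerivAt_eval_line P (fun _ => 0) (fun i => x i) 1
    simpa using this
  have h2 : HasDerivAt (fun t : ℝ => t ^ l * MvPolynomial.eval (fun i => x i) P)
      ((l : ℝ) * MvPolynomial.eval (fun i => x i) P) 1 := by
    have := (hasDerivAt_pow l (1:ℝ)).mul_const (MvPolynomial.eval (fun i => x i) P)
    simpa using this
  have heq : (fun t : ℝ => MvPolynomial.eval (fun i => t * x i) P)
      =ᶠ[nhds 1] (fun t : ℝ => t ^ l * MvPolynomial.eval (fun i => x i) P) := by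
    filter_upwards [Ioi_mem_nhds (by norm_num : (0:ℝ) < 1)] with t ht
    exact hhom t ht x
  exact ((h2.congr_of_eventuallyEq heq).unique h1).symm

/-- The Euclidean Laplacian `Δu(x) = Σ_j ∂²u/∂x_j²(x)`, where the second partial
derivative in the `j`-th coordinate direction is computed as the second derivative of
`s ↦ u(x + s·e_j)` at `s = 0`. -/
noncomputable def lap {m : ℕ} (u : EuclideanSpace ℝ (Fin m) → ℝ)
    (x : EuclideanSpace ℝ (Fin m)) : ℝ :=
  ∑ j : Fin m, deriv (deriv (fun s : ℝ => u (x + s • EuclideanSpace.single j (1:ℝ)))) 0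

set_option maxHeartbeats 2000000 in
/-- For `m ≥ 2`, `0 ≤ l ≤ a`, and a harmonic polynomial `P` on `ℝ^m` homogeneous of
degree `l`, the function `u(x) = L_{a-l}^{m-2+2l}(4|x|)·e^{-2|x|}·P(x)` satisfies
`|x|·(Δu(x)/4 − u(x)) = −(a+(m-1)/2)·u(x)` for `x ≠ 0`. -/
theorem fal_harmonic_eigenfunction (m l a : ℕ) (hm : 2 ≤ m) (hla : l ≤ a)
    (P : MvPolynomial (Fin m) ℝ)
    (hharm : ∑ j, MvPolynomial.pderiv j (MvPolynomial.pderiv j P) = 0)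
    (hhom : ∀ lam : ℝ, 0 < lam → ∀ x : EuclideanSpace ℝ (Fin m),
      MvPolynomial.eval (fun i => lam * x i) P =
        lam ^ l * MvPolynomial.eval (fun i => x i) P)
    (u : EuclideanSpace ℝ (Fin m) → ℝ)
    (hu : ∀ x : EuclideanSpace ℝ (Fin m),
      u x = laguerre (a - l) ((m : ℝ) - 2 + 2 * l) (4 * ‖x‖) * Real.exp (-2 * ‖x‖) *
        MvPolynomial.eval (fun i => x i) P) :
    ∀ x : EuclideanSpace ℝ (Fin m), x ≠ 0 →
      ‖x‖ * (lap u x / 4 - u x) = -((a : ℝ) + ((m : ℝ) - 1) / 2) * u x := by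
  intro x hx
  have hr : 0 < ‖x‖ := norm_pos_iff.mpr hx
  set r : ℝ := ‖x‖ with hr_def
  set n : ℕ := a - l with hn_def
  set α : ℝ := (m : ℝ) - 2 + 2 * l with hα_def
  have hm2 : (2:ℝ) ≤ (m:ℝ) := by exact_mod_cast hm
  have hl0 : (0:ℝ) ≤ (l:ℝ) := Nat.cast_nonneg l
  have hα : 0 ≤ α := by rw [hα_def]; linarith
  set p0 : ℝ := MvPolynomial.eval (fun i => x i) P with hp0_def
  set L0 : ℝ := laguerre n α (4 * r) with hL0_def
  set L1 : ℝ := lagd n α (4 * r) with hL1_def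
  set L2 : ℝ := lagdd n α (4 * r) with hL2_def
  set E : ℝ := Real.exp (-2 * r) with hE_def
  set K1 : ℝ := (16*L2/r^2 - 4*L1/r^3 + 4*L0/r^2 + 2*L0/r^3 - 16*L1/r^2) * p0 with hK1_def
  set K2 : ℝ := (4*L1/r - 2*L0/r) * p0 with hK2_def
  set K3 : ℝ := 8*L1/r - 4*L0/r with hK3_def
  have key : ∀ j : Fin m,
      deriv (deriv (fun s : ℝ => u (x + s • EuclideanSpace.single j (1:ℝ)))) 0
        = E * ((x j)^2 * K1 + K2
            + (x j * MvPolynomial.eval (fun i => x i) (MvPolynomial.pderiv j P)) * K3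
            + L0 * MvPolynomial.eval (fun i => x i)
                (MvPolynomial.pderiv j (MvPolynomial.pderiv j P))) := by
    intro j
    set q : ℝ → ℝ := fun s => r^2 + 2*(x j)*s + s^2 with hq_def
    have hqc : Continuous q := by rw [hq_def]; continuity
    have hq0 : 0 < q 0 := by simp [hq_def]; positivity
    set g : ℝ → ℝ := fun s => Real.sqrt (q s) with hg_def
    have hq' : ∀ s : ℝ, HasDerivAt q (2*(x j) + 2*s) s := by
      intro s
      have h1 : HasDerivAt (fun s : ℝ => r^2 + 2*(x j)*s) (2*(x j)) s := by
        simpa using ((hasDerivAt_id s).const_mul (2*(x j))).const_add (r^2)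
      have h2 : HasDerivAt (fun s : ℝ => s^2) (2*s) s := by
        simpa using hasDerivAt_pow 2 s
      exact h1.add h2
    have hgpos : ∀ s : ℝ, 0 < q s → 0 < g s := by
      intro s hs; rw [hg_def]; exact Real.sqrt_pos.mpr hs
    have hg' : ∀ s : ℝ, 0 < q s → HasDerivAt g ((x j + s)/g s) s := by
      intro s hs
      have hc := (Real.hasDerivAt_sqrt (ne_of_gt hs)).comp s (hq' s)
      have hgs := hgpos s hs
      have hsq : g s ^ 2 = q s := by
        rw [hg_def]; exact Real.sq_sqrt hs.le
      refine hc.congr_deriv ?_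
      symm
      rw [hg_def]
      rw [show Real.sqrt (q s) = g s from rfl]
      field_simp
      nlinarith [hsq]
    have hnorm : ∀ s : ℝ, ‖x + s • EuclideanSpace.single j (1:ℝ)‖ = g s := by
      intro s
      rw [hg_def, ← Real.sqrt_sq (norm_nonneg (x + s • EuclideanSpace.single j (1:ℝ)))]
      congr 1
      rw [norm_add_sq_real, hq_def]
      have h1 : inner ℝ x (s • EuclideanSpace.single j (1:ℝ)) = s * (x j) := by
        rw [real_inner_smul_right]
        rw [EuclideanSpace.inner_single_right]
        simp
      have h2 : ‖s • EuclideanSpace.single j (1:ℝ)‖^2 = s^2 := by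
        rw [norm_smul, EuclideanSpace.norm_single]
        simp [Real.norm_eq_abs, mul_pow, sq_abs]
      rw [h1, h2, hr_def]
      ring
    have hcoord : ∀ (s : ℝ), (fun i => (x + s • EuclideanSpace.single j (1:ℝ)) i)
        = fun i => x i + s * (if i = j then (1:ℝ) else 0) := by
      intro s
      funext i
      simp [EuclideanSpace.single_apply]
    set pl : ℝ → ℝ :=
      fun s => MvPolynomial.eval (fun i => x i + s * (if i = j then (1:ℝ) else 0)) P with hpl_def
    set pl' : ℝ → ℝ :=
      fun s => MvPolynomial.eval (fun i => x i + s * (if i = j then (1:ℝ) else 0))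
        (MvPolynomial.pderiv j P) with hpl'_def
    have hfun : (fun s : ℝ => u (x + s • EuclideanSpace.single j (1:ℝ)))
        = fun s => laguerre n α (4 * g s) * Real.exp (-2 * g s) * pl s := by
      funext s
      rw [hu, hnorm s, hcoord s, hpl_def]
    have hpl : ∀ s : ℝ, HasDerivAt pl (pl' s) s := by
      intro s
      exact hasDerivAt_eval_line_single P (fun i => x i) j s
    have hH1 : ∀ s : ℝ, 0 < q s →
        HasDerivAt (fun s : ℝ => u (x + s • EuclideanSpace.single j (1:ℝ)))
          ((lagd n α (4 * g s) * (4 * ((x j + s)/g s)) * Real.exp (-2 * g s) +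
            laguerre n α (4 * g s) * (Real.exp (-2 * g s) * (-2 * ((x j + s)/g s)))) * pl s +
            laguerre n α (4 * g s) * Real.exp (-2 * g s) * pl' s) s := by
      intro s hs
      rw [hfun]
      have hgs := hg' s hs
      have F1 : HasDerivAt (fun s : ℝ => laguerre n α (4 * g s))
          (lagd n α (4 * g s) * (4 * ((x j + s)/g s))) s :=
        by have := (hasDerivAt_laguerre n α (4 * g s)).comp s (hgs.const_mul 4); exact this
      have F2 : HasDerivAt (fun s : ℝ => Real.exp (-2 * g s))
          (Real.exp (-2 * g s) * (-2 * ((x j + s)/g s))) s :=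
        by have := (Real.hasDerivAt_exp (-2 * g s)).comp s (hgs.const_mul (-2)); exact this
      exact (F1.mul F2).mul (hpl s)
    have hev : deriv (fun s : ℝ => u (x + s • EuclideanSpace.single j (1:ℝ))) =ᶠ[nhds 0]
        (fun s : ℝ =>
          (lagd n α (4 * g s) * (4 * ((x j + s)/g s)) * Real.exp (-2 * g s) +
            laguerre n α (4 * g s) * (Real.exp (-2 * g s) * (-2 * ((x j + s)/g s)))) * pl s +
            laguerre n α (4 * g s) * Real.exp (-2 * g s) * pl' s) := by
      filter_upwards [(isOpen_lt continuous_const hqc).mem_nhds hq0] with s hs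
      exact (hH1 s hs).deriv
    rw [hev.deriv_eq]
    have hg0 := hg' 0 hq0
    have hg00 : g 0 = r := by
      have hq00 : q 0 = r^2 := by simp [hq_def]
      rw [hg_def]
      show Real.sqrt (q 0) = r
      rw [hq00, Real.sqrt_sq hr.le]
    have hgne : g 0 ≠ 0 := ne_of_gt (hgpos 0 hq0)
    have hgd : HasDerivAt (fun s : ℝ => (x j + s)/g s)
        ((1 * g 0 - (x j + 0) * ((x j + 0)/g 0)) / (g 0)^2) 0 :=
      ((hasDerivAt_id 0).const_add (x j)).div hg0 hgne
    have hlag0 : HasDerivAt (fun s : ℝ => laguerre n α (4 * g s))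
        (lagd n α (4 * g 0) * (4 * ((x j + 0)/g 0))) 0 :=
      by have := (hasDerivAt_laguerre n α (4 * g 0)).comp 0 (hg0.const_mul 4); exact this
    have hlagd0 : HasDerivAt (fun s : ℝ => lagd n α (4 * g s))
        (lagdd n α (4 * g 0) * (4 * ((x j + 0)/g 0))) 0 :=
      by have := (hasDerivAt_lagd n α (4 * g 0)).comp 0 (hg0.const_mul 4); exact this
    have hexp0 : HasDerivAt (fun s : ℝ => Real.exp (-2 * g s))
        (Real.exp (-2 * g 0) * (-2 * ((x j + 0)/g 0))) 0 :=
      by have := (Real.hasDerivAt_exp (-2 * g 0)).comp 0 (hg0.const_mul (-2)); exact this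
    have hpl'0 : HasDerivAt pl'
        (MvPolynomial.eval (fun i => x i + 0 * (if i = j then (1:ℝ) else 0))
          (MvPolynomial.pderiv j (MvPolynomial.pderiv j P))) 0 := by
      rw [hpl'_def]
      exact hasDerivAt_eval_line_single (MvPolynomial.pderiv j P) (fun i => x i) j 0
    have hpl0 : HasDerivAt pl (pl' 0) 0 := hpl 0
    have hbig := ((((hlagd0.fun_mul (hgd.const_mul 4)).fun_mul hexp0).fun_add
        (hlag0.fun_mul (hexp0.fun_mul (hgd.const_mul (-2))))).fun_mul hpl0).fun_add
        ((hlag0.fun_mul hexp0).fun_mul hpl'0)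
    rw [hbig.deriv]
    have hpl00 : pl 0 = p0 := by
      rw [hpl_def, hp0_def]
      simp
    have hpl'00 : pl' 0 = MvPolynomial.eval (fun i => x i) (MvPolynomial.pderiv j P) := by
      rw [hpl'_def]
      simp
    have heval2 : MvPolynomial.eval (fun i => x i + 0 * (if i = j then (1:ℝ) else 0))
        (MvPolynomial.pderiv j (MvPolynomial.pderiv j P))
        = MvPolynomial.eval (fun i => x i) (MvPolynomial.pderiv j (MvPolynomial.pderiv j P)) := by
      simp
    simp only [hg00, hpl00, hpl'00, heval2, add_zero, one_mul]
    rw [hK1_def, hK2_def, hK3_def, hE_def, hL0_def]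
    field_simp
    ring
  have hsumsq : ∑ j, (x j)^2 = r^2 := by
    have := EuclideanSpace.norm_eq x
    rw [hr_def, this, Real.sq_sqrt (by positivity)]
    simp [Real.norm_eq_abs, sq_abs]
  have heuler := euler_identity P hhom x
  have hharm0 : ∑ j, MvPolynomial.eval (fun i => x i)
      (MvPolynomial.pderiv j (MvPolynomial.pderiv j P)) = 0 := by
    have := congrArg (MvPolynomial.eval (fun i => x i)) hharm
    simpa [map_sum] using this
  have hlap : lap u x = E * (r^2 * K1 + (m:ℝ) * K2 + ((l:ℝ) * p0) * K3 + L0 * 0) := by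
    unfold lap
    rw [Finset.sum_congr rfl (fun j _ => key j), ← Finset.mul_sum]
    congr 1
    rw [Finset.sum_add_distrib, Finset.sum_add_distrib, Finset.sum_add_distrib,
      Finset.sum_const, Finset.card_univ, Fintype.card_fin, nsmul_eq_mul,
      ← Finset.sum_mul, ← Finset.sum_mul, ← Finset.mul_sum, hsumsq, heuler, hharm0]
  have hux : u x = L0 * E * p0 := by rw [hu x]
  have ode := laguerre_ode n α hα (4 * r)
  have hncast : (n : ℝ) = (a : ℝ) - (l : ℝ) := by
    rw [hn_def, Nat.cast_sub hla]
  have h4r : (4 * r) ≠ 0 := by positivity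
  have hL2eq : L2 = ((4*r - (α+1))*L1 - (n:ℝ)*L0)/(4*r) := by
    rw [hL2_def, hL1_def, hL0_def]
    field_simp
    linarith [ode]
  rw [hlap, hux, hK1_def, hK2_def, hK3_def, hL2eq, hncast, hα_def]
  field_simp
  ring
end
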